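/- arXiv:2006.13115 — 2 statements merged into one kernel-verified Lean document; each statement's English description precedes it below -/
import Mathlib

section
/- The series ∑_{k=1}^∞ (1/k) · C(2k,k) / 4^k equals 2·ln(2). -/
open scoped BigOperators
open Real

noncomputable def cb (k : ℕ) : ℝ := (Nat.choose (2*k) k : ℝ) / 4^k

noncomputable def H (k : ℕ) : ℝ := ∑ j ∈ Finset.range k, (1:ℝ)/(j+1)

noncomputable def oh (k : ℕ) : ℝ := ∑ j ∈ Finset.range k, (1:ℝ)/(2*j+1)

/-!
Since `∑_{i+j=n} cb i * cb j = 1`, the square of `g x = ∑ cb k * x ^ k` is the geometric series,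
so `g x = (1 - x)^(-1/2)` on `[0, 1)`. Integrating `(g x - 1) / x` termwise gives
`∑ cb (k+1) / (k+1) * x ^ (k+1) = 2 log 2 - 2 log (1 + √(1 - x))`, and Abel's limit theorem lets
`x → 1⁻`: the series converges at `1` because `cb (k+1) / (k+1) ≤ 2 (cb k - cb (k+1))` telescopes.
-/

open Filter Topology Finset

theorem Finset.Nat.two_mul_sum_antidiagonal_fst_mul {R : Type*} [CommSemiring R] (g : ℕ → R)
    (n : ℕ) :
    2 * ∑ p ∈ antidiagonal n, (p.1 : R) * (g p.1 * g p.2) =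
      n * ∑ p ∈ antidiagonal n, g p.1 * g p.2 := by
  rw [two_mul]
  nth_rewrite 2 [← Finset.Nat.sum_antidiagonal_swap]
  rw [← sum_add_distrib, mul_sum]
  refine sum_congr rfl fun p hp => ?_
  rw [← mem_antidiagonal.1 hp, Prod.fst_swap, Prod.snd_swap]
  push_cast
  ring

lemma cb_zero : cb 0 = 1 := by simp [cb]

lemma cb_pos (n : ℕ) : 0 < cb n := by
  have := Nat.choose_pos (show n ≤ 2 * n by omega)
  unfold cb
  positivity

lemma cb_succ (n : ℕ) : cb (n + 1) = (2 * n + 1) / (2 * n + 2) * cb n := by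
  have h := congrArg (Nat.cast : ℕ → ℝ) (Nat.succ_mul_centralBinom_succ n)
  push_cast [Nat.centralBinom_eq_two_mul_choose] at h
  simp only [cb]
  field_simp
  rw [pow_succ]
  linear_combination 2 * (4 : ℝ) ^ n * h

lemma cb_succ_le (n : ℕ) : cb (n + 1) ≤ cb n := by
  rw [cb_succ]
  exact mul_le_of_le_one_left (cb_pos n).le (div_le_one_of_le₀ (by linarith) (by positivity))

lemma cb_le_one (n : ℕ) : cb n ≤ 1 :=
  cb_zero ▸ antitone_nat_of_succ_le cb_succ_le (Nat.zero_le n)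

lemma one_div_succ_mul_cb_succ_le (k : ℕ) :
    1 / ((k : ℝ) + 1) * cb (k + 1) ≤ 2 * (cb k - cb (k + 1)) := by
  have := cb_pos k
  rw [cb_succ]
  field_simp
  nlinarith

lemma summable_one_div_succ_mul_cb_succ :
    Summable fun k : ℕ => 1 / ((k : ℝ) + 1) * cb (k + 1) := by
  refine summable_of_sum_range_le (c := 2) (fun k => mul_nonneg (by positivity) (cb_pos _).le)
    fun n => ?_
  calc ∑ k ∈ range n, 1 / ((k : ℝ) + 1) * cb (k + 1)
      ≤ ∑ k ∈ range n, 2 * (cb k - cb (k + 1)) :=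
        sum_le_sum fun k _ => one_div_succ_mul_cb_succ_le k
    _ = 2 * (cb 0 - cb n) := by rw [← mul_sum, sum_range_sub']
    _ ≤ 2 := by linarith [cb_zero, cb_pos n]

/- With `T n = ∑_{i+j=n} cb i * cb j`, the symmetry `i ↔ j` gives
`∑_{i+j=n} i * cb i * cb j = n T n / 2`, and `(i + 1) cb (i + 1) = (i + 1/2) cb i` turns this
into `(n + 1) T (n + 1) = (n + 1) T n`. -/
lemma sum_antidiagonal_cb_mul_cb (n : ℕ) : ∑ p ∈ antidiagonal n, cb p.1 * cb p.2 = 1 := by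
  induction n with
  | zero => simp [cb_zero]
  | succ n ih =>
    refine mul_left_cancel₀ (show (n : ℝ) + 1 ≠ 0 by positivity) ?_
    calc ((n : ℝ) + 1) * ∑ p ∈ antidiagonal (n + 1), cb p.1 * cb p.2
        = 2 * ∑ p ∈ antidiagonal (n + 1), (p.1 : ℝ) * (cb p.1 * cb p.2) := by
          rw [Finset.Nat.two_mul_sum_antidiagonal_fst_mul]; push_cast; ring
      _ = ∑ p ∈ antidiagonal n, (2 * p.1 + 1 : ℝ) * (cb p.1 * cb p.2) := by
          rw [Finset.Nat.sum_antidiagonal_succ]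
          simp only [Nat.cast_zero, zero_mul, zero_add, cb_succ]
          rw [mul_sum]
          refine sum_congr rfl fun p _ => ?_
          field_simp
          push_cast
          ring
      _ = 2 * ∑ p ∈ antidiagonal n, (p.1 : ℝ) * (cb p.1 * cb p.2)
            + ∑ p ∈ antidiagonal n, cb p.1 * cb p.2 := by
          rw [mul_sum, ← sum_add_distrib]
          exact sum_congr rfl fun p _ => by ring
      _ = ((n : ℝ) + 1) * 1 := by
          rw [Finset.Nat.two_mul_sum_antidiagonal_fst_mul, ih]; ring

lemma hasSum_cb_mul_pow {x : ℝ} (h0 : 0 ≤ x) (h1 : x < 1) :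
    HasSum (fun k => cb k * x ^ k) (√(1 - x))⁻¹ := by
  have hnorm : Summable fun k => ‖cb k * x ^ k‖ := by
    refine (summable_geometric_of_lt_one h0 h1).of_nonneg_of_le (fun k => norm_nonneg _) fun k => ?_
    rw [norm_mul, norm_pow, norm_of_nonneg (cb_pos k).le, norm_of_nonneg h0]
    exact mul_le_of_le_one_left (by positivity) (cb_le_one k)
  have hsq : (∑' k, cb k * x ^ k) * ∑' k, cb k * x ^ k = (1 - x)⁻¹ := by
    rw [tsum_mul_tsum_eq_tsum_sum_antidiagonal_of_summable_norm hnorm hnorm,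
      ← tsum_geometric_of_lt_one h0 h1]
    congr with n
    calc ∑ p ∈ antidiagonal n, cb p.1 * x ^ p.1 * (cb p.2 * x ^ p.2)
        = (∑ p ∈ antidiagonal n, cb p.1 * cb p.2) * x ^ n := by
          rw [sum_mul]
          refine sum_congr rfl fun p hp => ?_
          rw [← mem_antidiagonal.1 hp, pow_add]
          ring
      _ = x ^ n := by rw [sum_antidiagonal_cb_mul_cb, one_mul]
  have hnonneg : 0 ≤ ∑' k, cb k * x ^ k :=
    tsum_nonneg fun k => mul_nonneg (cb_pos k).le (pow_nonneg h0 k)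
  rw [← sqrt_inv, ← hsq, sqrt_mul_self hnonneg]
  exact hnorm.of_norm.hasSum

lemma hasSum_cb_succ_mul_pow {x : ℝ} (h0 : 0 ≤ x) (h1 : x < 1) :
    HasSum (fun k => cb (k + 1) * x ^ k) (√(1 - x) * (1 + √(1 - x)))⁻¹ := by
  rcases h0.eq_or_lt with rfl | hx
  · convert hasSum_single (f := fun k => cb (k + 1) * (0 : ℝ) ^ k) 0 fun k hk => by simp [hk]
    norm_num [cb]
  have htail := (hasSum_nat_add_iff' 1).2 (hasSum_cb_mul_pow h0 h1)
  simp only [sum_range_one, cb_zero, pow_zero, mul_one] at htail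
  have hvalue : (√(1 - x) * (1 + √(1 - x)))⁻¹ = ((√(1 - x))⁻¹ - 1) / x := by
    have hs : √(1 - x) ^ 2 = 1 - x := sq_sqrt (by linarith)
    have hs0 : 0 < √(1 - x) := sqrt_pos.2 (by linarith)
    field_simp
    linear_combination hs
  have hterm : (fun k => cb (k + 1) * x ^ k) = fun k => cb (k + 1) * x ^ (k + 1) / x := by
    ext k
    field_simp
    ring
  rw [hvalue, hterm]
  exact htail.div_const x

lemma hasDerivAt_tsum_one_div_succ_mul_pow_succ {c : ℕ → ℝ} {C : ℝ} (hc : ∀ n, |c n| ≤ C)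
    {x : ℝ} (hx : |x| < 1) :
    HasDerivAt (fun y => ∑' n : ℕ, 1 / ((n : ℝ) + 1) * c n * y ^ (n + 1))
      (∑' n, c n * x ^ n) x := by
  obtain ⟨r, hxr, hr1⟩ := exists_between hx
  have hr0 : 0 < r := (abs_nonneg x).trans_lt hxr
  refine hasDerivAt_tsum_of_isPreconnected (u := fun n => C * r ^ n) (y₀ := 0)
    (g := fun (n : ℕ) (y : ℝ) => 1 / ((n : ℝ) + 1) * c n * y ^ (n + 1))
    (g' := fun (n : ℕ) (y : ℝ) => c n * y ^ n)
    ((summable_geometric_of_lt_one hr0.le hr1).mul_left C) Metric.isOpen_ball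
    (convex_ball (0 : ℝ) r).isPreconnected (fun n y _ => ?_) (fun n y hy => ?_)
    (Metric.mem_ball_self hr0) (by simp) (by rwa [Metric.mem_ball, dist_zero_right])
  · refine ((hasDerivAt_pow (n + 1) y).const_mul (1 / ((n : ℝ) + 1) * c n)).congr_deriv ?_
    push_cast
    field_simp
  · rw [Metric.mem_ball, dist_zero_right] at hy
    rw [norm_mul, norm_pow, norm_eq_abs (c n)]
    exact mul_le_mul (hc n) (pow_le_pow_left₀ (norm_nonneg y) hy.le n) (by positivity)
      ((abs_nonneg _).trans (hc n))

lemma hasDerivAt_two_mul_log_one_add_sqrt_one_sub {x : ℝ} (hx : x < 1) :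
    HasDerivAt (fun y => 2 * log (1 + √(1 - y))) (-(√(1 - x) * (1 + √(1 - x)))⁻¹) x := by
  have hsub : HasDerivAt (fun y => 1 - y) (-1) x := by
    simpa using (hasDerivAt_id x).const_sub 1
  have hsqrt := (hsub.sqrt (by linarith)).const_add 1
  refine ((hsqrt.log (by positivity)).const_mul 2).congr_deriv ?_
  field_simp

lemma tsum_one_div_succ_mul_cb_succ_mul_pow_succ {x : ℝ} (h0 : 0 ≤ x) (h1 : x < 1) :
    ∑' k : ℕ, 1 / ((k : ℝ) + 1) * cb (k + 1) * x ^ (k + 1) =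
      2 * log 2 - 2 * log (1 + √(1 - x)) := by
  have hF (y : ℝ) (hy0 : 0 ≤ y) (hy1 : y < 1) :
      HasDerivAt (fun y => ∑' k : ℕ, 1 / ((k : ℝ) + 1) * cb (k + 1) * y ^ (k + 1))
        (√(1 - y) * (1 + √(1 - y)))⁻¹ y := by
    have hc : ∀ k, |cb (k + 1)| ≤ 1 := fun k => by
      rw [abs_of_pos (cb_pos _)]; exact cb_le_one _
    rw [← (hasSum_cb_succ_mul_pow hy0 hy1).tsum_eq]
    exact hasDerivAt_tsum_one_div_succ_mul_pow_succ hc (by rwa [abs_of_nonneg hy0])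
  have hG (y : ℝ) (hy : y ≤ x) :
      HasDerivAt (fun y => 2 * log 2 - 2 * log (1 + √(1 - y))) (√(1 - y) * (1 + √(1 - y)))⁻¹ y :=
    ((hasDerivAt_two_mul_log_one_add_sqrt_one_sub (hy.trans_lt h1)).const_sub _).congr_deriv
      (neg_neg _)
  refine eq_of_has_deriv_right_eq (fun y hy => (hF y hy.1 (hy.2.trans h1)).hasDerivWithinAt)
    (fun y hy => (hG y hy.2.le).hasDerivWithinAt)
    (fun y hy => (hF y hy.1 (hy.2.trans_lt h1)).continuousAt.continuousWithinAt)
    (fun y hy => (hG y hy.2).continuousAt.continuousWithinAt) (by norm_num) x ⟨h0, le_rfl⟩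

theorem stmt_0 : ∑' k : ℕ, (1/((k:ℝ)+1)) * cb (k+1) = 2 * Real.log 2 := by
  have habel := Real.tendsto_tsum_powerSeries_nhdsWithin_lt
    summable_one_div_succ_mul_cb_succ.hasSum.tendsto_sum_nat
  have hF : Tendsto (fun x => x * ∑' k : ℕ, 1 / ((k : ℝ) + 1) * cb (k + 1) * x ^ k) (𝓝[<] 1)
      (𝓝 (∑' k : ℕ, 1 / ((k : ℝ) + 1) * cb (k + 1))) := by
    simpa using (tendsto_id.mono_left nhdsWithin_le_nhds).mul habel
  have hG :
      Tendsto (fun x : ℝ => 2 * log 2 - 2 * log (1 + √(1 - x))) (𝓝[<] 1) (𝓝 (2 * log 2)) := by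
    have : ContinuousAt (fun x : ℝ => 2 * log 2 - 2 * log (1 + √(1 - x))) 1 := by
      fun_prop (disch := positivity)
    simpa using this.tendsto.mono_left nhdsWithin_le_nhds
  refine tendsto_nhds_unique hF (hG.congr' ?_)
  filter_upwards [Ioo_mem_nhdsLT zero_lt_one] with x hx
  rw [← tsum_one_div_succ_mul_cb_succ_mul_pow_succ hx.1.le hx.2, ← tsum_mul_left]
  exact tsum_congr fun k => by ring
end

section
/- The series ∑_{k=1}^∞ (h_k/(2k−1)) · C(2k,k)/4^k equals π/2, where h_k = ∑_{j=1}^k 1/(2j−1). -/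
open scoped BigOperators
open Real

/-!
Abel summation, using `oh (k + 1) - oh k = 1 / (2k + 1)` and
`cb k - cb (k + 1) = cb (k + 1) / (2k + 1)`, turns the partial sums into
`∑_{k<n} cb k / (2k + 1) - oh n * cb n`. The boundary term is `O(log n / √n)` because
`(2n + 1) cb n ² ≤ 1`. The first sum is the Taylor polynomial `T` of `arcsin` at `1`. For
`E θ = θ - T (sin θ)` one has `E 0 = E' 0 = 0` and `E'' θ = (2n - 1) cb (n - 1) sin θ ^ (2n - 1) ≥ 0`,
so `E (π / 2) = ∫ (π / 2 - θ) E'' θ dθ`, and Jordan's inequality `π / 2 - θ ≤ (π / 2) cos θ` bounds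
this by `(π / 2) cb n`. Hence `0 ≤ π / 2 - ∑_{k<n} cb k / (2k + 1) ≤ (π / 2) cb n`.
-/

open Filter Topology Finset

lemma cb_nonneg (k : ℕ) : 0 ≤ cb k := by unfold cb; positivity

lemma two_mul_add_two_mul_cb_succ (k : ℕ) : (2 * k + 2) * cb (k + 1) = (2 * k + 1) * cb k := by
  have h : ((k + 1 : ℕ) : ℝ) * (k + 1).centralBinom = 2 * (2 * k + 1) * k.centralBinom := by
    exact_mod_cast Nat.succ_mul_centralBinom_succ k
  simp only [cb, ← Nat.centralBinom_eq_two_mul_choose, pow_succ] at h ⊢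
  push_cast at h
  field_simp
  linear_combination 2 * h

lemma two_mul_add_one_mul_cb_sq_le_one (k : ℕ) : (2 * k + 1) * cb k ^ 2 ≤ 1 := by
  induction k with
  | zero => simp [cb_zero]
  | succ k ih =>
    have h := two_mul_add_two_mul_cb_succ k
    have key : (2 * k + 2) ^ 2 * ((2 * k + 3) * cb (k + 1) ^ 2)
        = (2 * k + 3) * (2 * k + 1) * ((2 * k + 1) * cb k ^ 2) := by
      linear_combination (2 * k + 3) * ((2 * k + 2) * cb (k + 1) + (2 * k + 1) * cb k) * h
    have hle : (2 * k + 3) * (2 * k + 1) * ((2 * k + 1) * cb k ^ 2) ≤ (2 * k + 2) ^ 2 * 1 := by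
      nlinarith
    have hpos : (0 : ℝ) < (2 * k + 2) ^ 2 := by positivity
    push_cast
    linarith [le_of_mul_le_mul_left (key ▸ hle) hpos]

lemma oh_nonneg (n : ℕ) : 0 ≤ oh n := sum_nonneg fun j _ ↦ by positivity

lemma oh_succ (n : ℕ) : oh (n + 1) = oh n + 1 / (2 * n + 1) := sum_range_succ _ _

lemma oh_le_H (n : ℕ) : oh n ≤ H n :=
  sum_le_sum fun j _ ↦
    one_div_le_one_div_of_le (by positivity) (by linarith [j.cast_nonneg (α := ℝ)])

lemma H_le_one_add_log (n : ℕ) : H n ≤ 1 + log n := by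
  simpa [H, harmonic] using harmonic_le_one_add_log n

lemma tendsto_add_log_sq_div (c : ℝ) :
    Tendsto (fun x ↦ (c + log x) ^ 2 / (2 * x + 1)) atTop (𝓝 0) := by
  have h k := tendsto_pow_log_div_mul_add_atTop 2 1 k two_ne_zero
  convert ((h 0).const_mul (c ^ 2)).add (((h 1).const_mul (2 * c)).add (h 2)) using 2 <;> ring

lemma tendsto_add_log_mul_cb (c : ℝ) : Tendsto (fun n : ℕ ↦ (c + log n) * cb n) atTop (𝓝 0) := by
  have hsq : Tendsto (fun n : ℕ ↦ ((c + log n) * cb n) ^ 2) atTop (𝓝 0) := by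
    refine squeeze_zero (fun n ↦ sq_nonneg _) (fun n ↦ ?_)
      ((tendsto_add_log_sq_div c).comp tendsto_natCast_atTop_atTop)
    rw [Function.comp_apply, le_div_iff₀ (by positivity), mul_pow]
    nlinarith [two_mul_add_one_mul_cb_sq_le_one n, sq_nonneg (c + log n)]
  rw [tendsto_zero_iff_abs_tendsto_zero]
  simpa only [Function.comp_def, sqrt_sq_eq_abs, sqrt_zero] using hsq.sqrt

lemma le_of_hasDerivAt_nonneg {f f' : ℝ → ℝ} {a b : ℝ} (hab : a ≤ b)
    (hf : ∀ x, HasDerivAt f (f' x) x) (hf' : ∀ x ∈ Set.Icc a b, 0 ≤ f' x) : f a ≤ f b :=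
  monotoneOn_of_hasDerivWithinAt_nonneg (convex_Icc a b)
    (continuous_iff_continuousAt.2 fun x ↦ (hf x).continuousAt).continuousOn
    (fun x _ ↦ (hf x).hasDerivWithinAt)
    (fun x hx ↦ hf' x (interior_subset hx)) (Set.left_mem_Icc.2 hab) (Set.right_mem_Icc.2 hab) hab

noncomputable def arcsinTaylor (n : ℕ) (x : ℝ) : ℝ :=
  ∑ k ∈ range n, cb k / (2 * k + 1) * x ^ (2 * k + 1)

noncomputable def invSqrtTaylor (n : ℕ) (x : ℝ) : ℝ := ∑ k ∈ range n, cb k * x ^ (2 * k)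

lemma arcsinTaylor_zero_right (n : ℕ) : arcsinTaylor n 0 = 0 := by simp [arcsinTaylor]

lemma invSqrtTaylor_succ_zero_right (n : ℕ) : invSqrtTaylor (n + 1) 0 = 1 := by
  simp [invSqrtTaylor, sum_range_succ', cb_zero]

lemma arcsinTaylor_succ (n : ℕ) (x : ℝ) :
    arcsinTaylor (n + 1) x = arcsinTaylor n x + cb n / (2 * n + 1) * x ^ (2 * n + 1) :=
  sum_range_succ _ _

lemma invSqrtTaylor_succ (n : ℕ) (x : ℝ) :
    invSqrtTaylor (n + 1) x = invSqrtTaylor n x + cb n * x ^ (2 * n) :=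
  sum_range_succ _ _

lemma hasDerivAt_arcsinTaylor (n : ℕ) (x : ℝ) :
    HasDerivAt (arcsinTaylor n) (invSqrtTaylor n x) x := by
  unfold arcsinTaylor invSqrtTaylor
  refine HasDerivAt.fun_sum fun k _ ↦
    ((hasDerivAt_pow (2 * k + 1) x).const_mul (cb k / (2 * k + 1))).congr_deriv ?_
  rw [Nat.add_sub_cancel]
  push_cast
  field_simp

lemma hasDerivAt_cos_mul_invSqrtTaylor_sin (n : ℕ) (θ : ℝ) :
    HasDerivAt (fun t ↦ cos t * invSqrtTaylor (n + 1) (sin t))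
      (-((2 * n + 1) * cb n * sin θ ^ (2 * n + 1))) θ := by
  induction n with
  | zero => simpa [invSqrtTaylor, cb_zero] using hasDerivAt_cos θ
  | succ n ih =>
    simp only [invSqrtTaylor_succ (n + 1), mul_add]
    refine (ih.fun_add ((hasDerivAt_cos θ).fun_mul
      (((hasDerivAt_sin θ).fun_pow (2 * (n + 1))).const_mul (cb (n + 1))))).congr_deriv ?_
    rw [show 2 * (n + 1) - 1 = 2 * n + 1 by omega]
    push_cast
    linear_combination sin θ ^ (2 * n + 1) * two_mul_add_two_mul_cb_succ n
      + (2 * n + 2) * cb (n + 1) * sin θ ^ (2 * n + 1) * cos_sq_add_sin_sq θ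

/-- With `E θ = θ - arcsinTaylor (n + 1) (sin θ)`, this is `E θ + (π / 2 - θ) * E' θ`, the value at
`π / 2` of the tangent line to `E` at `θ`; its derivative is therefore `(π / 2 - θ) * E'' θ`. -/
noncomputable def tangentRemainder (n : ℕ) (θ : ℝ) : ℝ :=
  θ - arcsinTaylor (n + 1) (sin θ) + (π / 2 - θ) * (1 - cos θ * invSqrtTaylor (n + 1) (sin θ))

lemma hasDerivAt_tangentRemainder (n : ℕ) (θ : ℝ) :
    HasDerivAt (tangentRemainder n)
      ((π / 2 - θ) * ((2 * n + 1) * cb n * sin θ ^ (2 * n + 1))) θ := by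
  have hF := (hasDerivAt_arcsinTaylor (n + 1) (sin θ)).comp θ (hasDerivAt_sin θ)
  have hG := hasDerivAt_cos_mul_invSqrtTaylor_sin n θ
  refine (((hasDerivAt_id θ).sub hF).add
    (((hasDerivAt_id θ).const_sub (π / 2)).mul (hG.const_sub 1))).congr_deriv ?_
  simp only [id]
  ring

lemma tangentRemainder_zero (n : ℕ) : tangentRemainder n 0 = 0 := by
  simp [tangentRemainder, arcsinTaylor_zero_right, invSqrtTaylor_succ_zero_right]

lemma tangentRemainder_pi_div_two (n : ℕ) :
    tangentRemainder n (π / 2) = π / 2 - arcsinTaylor (n + 1) 1 := by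
  simp [tangentRemainder]

lemma arcsinTaylor_one_le (n : ℕ) : arcsinTaylor n 1 ≤ π / 2 := by
  cases n with
  | zero => simp only [arcsinTaylor, sum_range_zero]; positivity
  | succ n =>
    have h := le_of_hasDerivAt_nonneg (b := π / 2) (by positivity) (hasDerivAt_tangentRemainder n)
      fun θ hθ ↦ mul_nonneg (by linarith [hθ.2]) <|
        mul_nonneg (mul_nonneg (by positivity) (cb_nonneg n))
          (pow_nonneg (sin_nonneg_of_nonneg_of_le_pi hθ.1 (by linarith [hθ.2, pi_pos])) _)
    rw [tangentRemainder_zero, tangentRemainder_pi_div_two] at h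
    linarith

lemma pi_div_two_sub_le_cos {θ : ℝ} (h₀ : 0 ≤ θ) (h₁ : θ ≤ π / 2) :
    π / 2 - θ ≤ π / 2 * cos θ := by
  have h := mul_le_sin (x := π / 2 - θ) (by linarith) (by linarith)
  rw [sin_pi_div_two_sub] at h
  have := pi_pos
  calc π / 2 - θ = π / 2 * (2 / π * (π / 2 - θ)) := by field_simp
    _ ≤ π / 2 * cos θ := by gcongr

lemma pi_div_two_mul_one_sub_cb_le_arcsinTaylor (n : ℕ) :
    π / 2 * (1 - cb n) ≤ arcsinTaylor n 1 := by
  cases n with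
  | zero => simp [arcsinTaylor, cb_zero]
  | succ n =>
    have hd θ := (((hasDerivAt_sin θ).pow (2 * n + 2)).const_mul (π / 2 * cb (n + 1))).sub
      (hasDerivAt_tangentRemainder n θ)
    have h := le_of_hasDerivAt_nonneg (b := π / 2) (by positivity) hd fun θ hθ ↦ by
      have hs := sin_nonneg_of_nonneg_of_le_pi hθ.1 (by linarith [hθ.2, pi_pos])
      have hj := pi_div_two_sub_le_cos hθ.1 hθ.2
      have hS := mul_nonneg (mul_nonneg (by positivity : (0:ℝ) ≤ 2 * n + 1) (cb_nonneg n))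
        (pow_nonneg hs (2 * n + 1))
      rw [show 2 * n + 2 - 1 = 2 * n + 1 by omega]
      refine (mul_nonneg hS (sub_nonneg.2 hj)).trans_eq ?_
      push_cast
      linear_combination (-(π / 2 * sin θ ^ (2 * n + 1) * cos θ)) * two_mul_add_two_mul_cb_succ n
    norm_num [tangentRemainder_zero, tangentRemainder_pi_div_two] at h
    linarith

lemma sum_oh_mul_cb_eq (n : ℕ) :
    ∑ k ∈ range n, oh (k + 1) / (2 * ((k : ℝ) + 1) - 1) * cb (k + 1)
      = arcsinTaylor n 1 - oh n * cb n := by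
  induction n with
  | zero => simp [arcsinTaylor, oh]
  | succ n ih =>
    rw [sum_range_succ, ih, arcsinTaylor_succ, oh_succ, one_pow, mul_one]
    have h := two_mul_add_two_mul_cb_succ n
    have hn : (2 * n + 1 : ℝ) ≠ 0 := by positivity
    rw [show 2 * ((n : ℝ) + 1) - 1 = 2 * n + 1 by ring]
    field_simp
    linear_combination (oh n * (2 * n + 1) + 1) * h

theorem stmt_17 :
    ∑' k : ℕ, (oh (k+1)/(2*((k:ℝ)+1)-1)) * cb (k+1) = Real.pi/2 := by
  have hterm (k : ℕ) : 0 ≤ oh (k + 1) / (2 * ((k : ℝ) + 1) - 1) * cb (k + 1) :=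
    mul_nonneg (div_nonneg (oh_nonneg _) (by linarith [k.cast_nonneg (α := ℝ)])) (cb_nonneg _)
  refine ((hasSum_iff_tendsto_nat_of_nonneg hterm _).2 ?_).tsum_eq
  simp only [sum_oh_mul_cb_eq]
  have hlow (n : ℕ) : π / 2 - (π / 2 + 1 + log n) * cb n ≤ arcsinTaylor n 1 - oh n * cb n := by
    nlinarith [pi_div_two_mul_one_sub_cb_le_arcsinTaylor n, oh_le_H n, H_le_one_add_log n,
      cb_nonneg n]
  have hup (n : ℕ) : arcsinTaylor n 1 - oh n * cb n ≤ π / 2 := by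
    nlinarith [arcsinTaylor_one_le n, oh_nonneg n, cb_nonneg n]
  refine tendsto_of_tendsto_of_tendsto_of_le_of_le ?_ tendsto_const_nhds hlow hup
  simpa using tendsto_const_nhds.sub (tendsto_add_log_mul_cb (π / 2 + 1))
end
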